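/- (Finite character of morphisms) Let K be an inductive amalgamation class and let M, N be models of K. A map f : M → N is a morphism of K if and only if for every finite h ⊆ f the map h : M → N is a morphism of K. -/

import Mathlib

/-!
By Zorn's lemma and axiom In, `M` and `N` have `≤`-extensions `A` and `B` that are maximal models.
Between maximal models axiom Ap gives the morphisms the one-point back-and-forth property, so every
morphism `A → B` is an elementary map. If all finite parts of `G` are morphisms `M → N`, hence
`A → B`, then `G` preserves all formulas as a map `A → B`; by K1 it is a morphism `A → B`, and it
restricts to a morphism `M → N`.
-/

namespace Amalg

open FirstOrder FirstOrder.Language Set Cardinal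

universe u

/-- A "model": an `L`-structure whose carrier is a subset of the fixed universe of points `W`. -/
structure Mdl (L : FirstOrder.Language.{u, u}) (W : Type u) where
  s : Set W
  str : L.Structure ↥s

attribute [instance] Mdl.str

variable {L : FirstOrder.Language.{u, u}} {W : Type u}

/-- The graph of the identity map on a set `s`. -/
def idGraph (s : Set W) : Set (W × W) := {p | p.1 ∈ s ∧ p.1 = p.2}

/-- Composition of (graphs of) partial maps. -/
def relComp (F G : Set (W × W)) : Set (W × W) := {p | ∃ b, (p.1, b) ∈ F ∧ (b, p.2) ∈ G}

/-- The graph of the inverse of a partial map. -/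
def swapGraph (G : Set (W × W)) : Set (W × W) := {p | (p.2, p.1) ∈ G}

/-- The graph `G` is a map from (a subset of) `M` to `N`. -/
def inCarriers (M N : Mdl L W) (G : Set (W × W)) : Prop :=
  ∀ p ∈ G, p.1 ∈ M.s ∧ p.2 ∈ N.s

/-- `G` is (the graph of) a partial embedding from `M` to `N`: it preserves all
quantifier-free formulas in both directions. -/
def IsPartialEmbedding (M N : Mdl L W) (G : Set (W × W)) : Prop :=
  inCarriers M N G ∧
    ∀ (n : ℕ) (φ : L.Formula (Fin n)), φ.IsQF →
      ∀ (x : Fin n → ↥M.s) (y : Fin n → ↥N.s),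
        (∀ i, ((x i : W), (y i : W)) ∈ G) → (φ.Realize x ↔ φ.Realize y)

/-- `G` is (the graph of) an elementary map from `M` to `N`: it preserves all
first-order formulas in both directions. -/
def IsElemMap (M N : Mdl L W) (G : Set (W × W)) : Prop :=
  inCarriers M N G ∧
    ∀ (n : ℕ) (φ : L.Formula (Fin n)) (x : Fin n → ↥M.s) (y : Fin n → ↥N.s),
      (∀ i, ((x i : W), (y i : W)) ∈ G) → (φ.Realize x ↔ φ.Realize y)

/-- A category of infinite `L`-structures and partial embeddings between them, satisfying
axioms K0, K1, K2. -/
structure CatC (L : FirstOrder.Language.{u, u}) (W : Type u) where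
  IsMdl : Mdl L W → Prop
  IsMor : Mdl L W → Mdl L W → Set (W × W) → Prop
  infinite : ∀ M, IsMdl M → M.s.Infinite
  mor_src : ∀ M N G, IsMor M N G → IsMdl M
  mor_tgt : ∀ M N G, IsMor M N G → IsMdl N
  mor_pe : ∀ M N G, IsMor M N G → IsPartialEmbedding M N G
  id_mor : ∀ M, IsMdl M → IsMor M M (idGraph M.s)
  comp_mor : ∀ M N P F G, IsMor M N F → IsMor N P G → IsMor M P (relComp F G)
  k0 : ∀ M N : Mdl L W, IsMdl M → (↥M.s ≅[L] ↥N.s) → IsMdl N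
  k1 : ∀ M N G, IsMdl M → IsMdl N → IsElemMap M N G → IsMor M N G
  k2 : ∀ M N G, IsMor M N G → IsMor N M (swapGraph G)

/-- `M` is a strong submodel of `N`: `M ⊆ N` and the identity on `M` is a morphism. -/
def Le (IsMor : Mdl L W → Mdl L W → Set (W × W) → Prop) (M N : Mdl L W) : Prop :=
  M.s ⊆ N.s ∧ IsMor M N (idGraph M.s)

/-- `G` is a strong embedding of `M` into `N`: a total morphism. -/
def StrongEmb (IsMor : Mdl L W → Mdl L W → Set (W × W) → Prop)
    (M N : Mdl L W) (G : Set (W × W)) : Prop :=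
  IsMor M N G ∧ ∀ a ∈ M.s, ∃ b, (a, b) ∈ G

/-- A category as above additionally satisfying axiom R (restrictions of morphisms
are morphisms). -/
structure CatR (L : FirstOrder.Language.{u, u}) (W : Type u) extends CatC L W where
  restr : ∀ M N F G, IsMor M N G → F ⊆ G → IsMor M N F

/-- An inductive amalgamation class: axioms K0, K1, K2, R, Ap and In. -/
structure IAC (L : FirstOrder.Language.{u, u}) (W : Type u) extends CatR L W where
  ap : ∀ M N F, IsMor M N F →
    ∃ (N' : Mdl L W) (H : Set (W × W)), Le IsMor N N' ∧ F ⊆ H ∧ StrongEmb IsMor M N' H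
  ind : ∀ (ι : Type u) [LinearOrder ι] [Nonempty ι] (Ms : ι → Mdl L W),
    (∀ i j, i ≤ j → Le IsMor (Ms i) (Ms j)) →
    ∃ Mu : Mdl L W, Mu.s = ⋃ i, (Ms i).s ∧ IsMdl Mu ∧ ∀ i, Le IsMor (Ms i) Mu

/-- `U` is a `κ`-rich model: every morphism `f : M → U` with `|f| < |M| ≤ κ` extends
to a strong embedding of `M` into `U`. -/
def RichAt (IsMdl : Mdl L W → Prop) (IsMor : Mdl L W → Mdl L W → Set (W × W) → Prop)
    (κ : Cardinal.{u}) (U : Mdl L W) : Prop :=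
  IsMdl U ∧ ∀ (M : Mdl L W) (G : Set (W × W)), IsMor M U G → #↥G < #↥M.s → #↥M.s ≤ κ →
    ∃ H, G ⊆ H ∧ StrongEmb IsMor M U H

/-- `U` is rich: `|U|`-rich. -/
def Rich (IsMdl : Mdl L W → Prop) (IsMor : Mdl L W → Mdl L W → Set (W × W) → Prop)
    (U : Mdl L W) : Prop :=
  RichAt IsMdl IsMor (#↥U.s) U

/-- The class is connected: between any two models there is a morphism. -/
def Connected (IsMdl : Mdl L W → Prop)
    (IsMor : Mdl L W → Mdl L W → Set (W × W) → Prop) : Prop :=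
  ∀ M N, IsMdl M → IsMdl N → ∃ G, IsMor M N G

/-- The theory of the rich models: the sentences true in every rich model. -/
def Trich (IsMdl : Mdl L W → Prop)
    (IsMor : Mdl L W → Mdl L W → Set (W × W) → Prop) : L.Theory :=
  {φ | ∀ U : Mdl L W, Rich IsMdl IsMor U → Sentence.Realize (↥U.s) φ}

/-- The class is full: if every sentence true in a model `M` is true in some rich model,
then some rich model satisfies the whole theory of `M`. -/
def Full (IsMdl : Mdl L W → Prop)
    (IsMor : Mdl L W → Mdl L W → Set (W × W) → Prop) : Prop :=
  ∀ M, IsMdl M →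
    (∀ φ : L.Sentence, Sentence.Realize (↥M.s) φ → ∃ U, Rich IsMdl IsMor U ∧ Sentence.Realize (↥U.s) φ) →
    ∃ U, Rich IsMdl IsMor U ∧ ∀ φ : L.Sentence, Sentence.Realize (↥M.s) φ → Sentence.Realize (↥U.s) φ

/-- `M` is a substructure of `N`: `M ⊆ N` and the inclusion is a partial embedding. -/
def Substr (M N : Mdl L W) : Prop :=
  M.s ⊆ N.s ∧ IsPartialEmbedding M N (idGraph M.s)

/-- `M` is an elementary substructure of `N`. -/
def ElemSubstr (M N : Mdl L W) : Prop :=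
  M.s ⊆ N.s ∧ IsElemMap M N (idGraph M.s)

/-- Realization of a formula in an explicitly given structure. -/
def RealizeIn (L : FirstOrder.Language.{u, u}) (N : Type u) (SN : L.Structure N) {α : Type u}
    (φ : L.Formula α) (v : α → N) : Prop :=
  letI := SN
  φ.Realize v

/-- `M` is `κ`-saturated: every type (in finitely many variables) over a parameter set
`A ⊆ M` with `|A| < κ` which is consistent with the theory of `M` with parameters from `A`
is realized in `M`. -/
def IsSatAt (L : FirstOrder.Language.{u, u}) (κ : Cardinal.{u}) (M : Type u) [L.Structure M] : Prop :=
  ∀ (A : Set M), #↥A < κ →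
    ∀ (n : ℕ) (p : Set (L.Formula (Fin n ⊕ ↥A))),
      (∃ (N : Type u) (SN : L.Structure N) (v : ↥A → N) (w : Fin n → N),
        (∀ ψ : L.Formula ↥A, ψ.Realize ((↑) : ↥A → M) ↔ RealizeIn L N SN ψ v) ∧
        ∀ φ ∈ p, RealizeIn L N SN φ (Sum.elim w v)) →
      ∃ a : Fin n → M, ∀ φ ∈ p, φ.Realize (Sum.elim a ((↑) : ↥A → M))

/-- `M` is saturated: `|M|`-saturated. -/
def IsSat (L : FirstOrder.Language.{u, u}) (M : Type u) [L.Structure M] : Prop :=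
  IsSatAt L (#M) M

/-- A theory is model-complete: whenever `M ⊆ N` are models of `T`,
`M` is an elementary substructure of `N`. -/
def IsModelComplete (W : Type u) (T : L.Theory) : Prop :=
  ∀ M N : Mdl L W, Theory.Model (↥M.s) T → Theory.Model (↥N.s) T → Substr M N → ElemSubstr M N

theorem swapGraph_idGraph (s : Set W) : swapGraph (idGraph s) = idGraph s := by
  ext ⟨a, b⟩
  simp only [swapGraph, idGraph, mem_ofPred_eq]
  constructor <;> rintro ⟨h, rfl⟩ <;> exact ⟨h, rfl⟩

theorem swapGraph_insert (a b : W) (G : Set (W × W)) :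
    swapGraph (insert (a, b) G) = insert (b, a) (swapGraph G) := by
  ext ⟨x, y⟩
  simp only [swapGraph, mem_insert_iff, mem_ofPred_eq, Prod.mk.injEq]
  tauto

theorem relComp_idGraph_left {s : Set W} {G : Set (W × W)} (h : ∀ p ∈ G, p.1 ∈ s) :
    relComp (idGraph s) G = G := by
  ext ⟨a, b⟩
  simp only [relComp, idGraph, mem_ofPred_eq]
  exact ⟨fun ⟨_, ⟨_, hc⟩, hG⟩ => hc ▸ hG, fun hG => ⟨a, ⟨h _ hG, rfl⟩, hG⟩⟩

theorem relComp_idGraph_right {s : Set W} {G : Set (W × W)} (h : ∀ p ∈ G, p.2 ∈ s) :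
    relComp G (idGraph s) = G := by
  ext ⟨a, b⟩
  simp only [relComp, idGraph, mem_ofPred_eq]
  exact ⟨fun ⟨_, hG, _, hc⟩ => hc ▸ hG, fun hG => ⟨b, hG, h _ hG, rfl⟩⟩

section BackAndForth

open BoundedFormula

variable {SA SB : Type*} [L.Structure SA] [L.Structure SB]

variable (L) in
def PreservesQF (F : Set (SA × SB)) : Prop :=
  ∀ (m : ℕ) (ψ : L.Formula (Fin m)), ψ.IsQF →
    ∀ (x : Fin m → SA) (y : Fin m → SB), (∀ i, (x i, y i) ∈ F) → (ψ.Realize x ↔ ψ.Realize y)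

theorem PreservesQF.realize_iff_of_isAtomic {F : Set (SA × SB)} (hF : PreservesQF L F)
    {n k : ℕ} {φ : L.BoundedFormula (Fin n) k} (hφ : φ.IsAtomic)
    {v : Fin n → SA} {v' : Fin n → SB} {xs : Fin k → SA} {xs' : Fin k → SB}
    (hv : ∀ i, (v i, v' i) ∈ F) (hxs : ∀ i, (xs i, xs' i) ∈ F) :
    φ.Realize v xs ↔ φ.Realize v' xs' := by
  -- merge the free and the bound variables into one tuple of length `n + k`
  have hqf : (φ.toFormula.relabel finSumFinEquiv).IsQF := by
    refine IsQF.relabel ?_ _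
    cases hφ with
    | equal => exact (IsAtomic.equal _ _).isQF
    | rel => exact (IsAtomic.rel _ _).isQF
  have key := hF (n + k) _ hqf (Sum.elim v xs ∘ finSumFinEquiv.symm)
    (Sum.elim v' xs' ∘ finSumFinEquiv.symm) fun i => by
      obtain ⟨j | j, rfl⟩ := finSumFinEquiv.surjective i <;> simp [hv, hxs]
  simpa [Function.comp_assoc] using key

variable (L) in
structure IsBackAndForth (P : Set (Set (SA × SB))) : Prop where
  preservesQF : ∀ F ∈ P, PreservesQF L F
  forth : ∀ F ∈ P, ∀ a, ∃ b, insert (a, b) F ∈ P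
  back : ∀ F ∈ P, ∀ b, ∃ a, insert (a, b) F ∈ P

theorem forall_snoc_mem_insert {F : Set (SA × SB)} {k : ℕ} {xs : Fin k → SA} {xs' : Fin k → SB}
    (hxs : ∀ i, (xs i, xs' i) ∈ F) (a : SA) (b : SB) :
    ∀ i, ((Fin.snoc xs a : Fin (k + 1) → SA) i, (Fin.snoc xs' b : Fin (k + 1) → SB) i) ∈
      insert (a, b) F := by
  refine Fin.lastCases ?_ fun i => ?_
  · simp
  · simpa only [Fin.snoc_castSucc] using mem_insert_of_mem _ (hxs i)

theorem IsBackAndForth.realize_boundedFormula_iff {P : Set (Set (SA × SB))}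
    (hP : IsBackAndForth L P) {n k : ℕ} (φ : L.BoundedFormula (Fin n) k) :
    ∀ F ∈ P, ∀ {v : Fin n → SA} {v' : Fin n → SB} {xs : Fin k → SA} {xs' : Fin k → SB},
      (∀ i, (v i, v' i) ∈ F) → (∀ i, (xs i, xs' i) ∈ F) → (φ.Realize v xs ↔ φ.Realize v' xs') := by
  induction φ with
  | falsum => intros; exact Iff.rfl
  | equal t₁ t₂ => exact fun F hF _ _ _ _ hv hxs =>
      (hP.preservesQF F hF).realize_iff_of_isAtomic (IsAtomic.equal t₁ t₂) hv hxs
  | rel R ts => exact fun F hF _ _ _ _ hv hxs =>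
      (hP.preservesQF F hF).realize_iff_of_isAtomic (IsAtomic.rel R ts) hv hxs
  | imp φ ψ ihφ ihψ =>
    intro F hF v v' xs xs' hv hxs
    simp only [realize_imp, ihφ F hF hv hxs, ihψ F hF hv hxs]
  | all φ ih =>
    intro F hF v v' xs xs' hv hxs
    simp only [realize_all]
    constructor
    · intro h b
      obtain ⟨a, hab⟩ := hP.back F hF b
      exact (ih _ hab (fun i => mem_insert_of_mem _ (hv i))
        (forall_snoc_mem_insert hxs a b)).1 (h a)
    · intro h a
      obtain ⟨b, hab⟩ := hP.forth F hF a
      exact (ih _ hab (fun i => mem_insert_of_mem _ (hv i))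
        (forall_snoc_mem_insert hxs a b)).2 (h b)

end BackAndForth

theorem isElemMap_of_forall_finite_subset {A B : Mdl L W} {G : Set (W × W)}
    (hG : inCarriers A B G) (h : ∀ H ⊆ G, H.Finite → IsElemMap A B H) : IsElemMap A B G :=
  ⟨hG, fun n φ x y hxy => (h (range fun i => ((x i : W), (y i : W))) (range_subset_iff.2 hxy)
    (finite_range _)).2 n φ x y fun i => ⟨i, rfl⟩⟩

namespace CatC

variable (K : CatC L W) {A A' B B' C : Mdl L W} {F : Set (W × W)}

theorem inCarriers_of_isMor (h : K.IsMor A B F) : inCarriers A B F :=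
  (K.mor_pe _ _ _ h).1

theorem le_refl_of_isMdl (h : K.IsMdl A) : Le K.IsMor A A :=
  ⟨subset_rfl, K.id_mor A h⟩

theorem le_trans (h₁ : Le K.IsMor A B) (h₂ : Le K.IsMor B C) : Le K.IsMor A C := by
  refine ⟨h₁.1.trans h₂.1, ?_⟩
  have h := K.comp_mor _ _ _ _ _ h₁.2 h₂.2
  rwa [relComp_idGraph_right fun p hp => hp.2 ▸ h₁.1 hp.1] at h

theorem isMor_of_le (h : K.IsMor A B F) (hA : Le K.IsMor A A') (hB : Le K.IsMor B B') :
    K.IsMor A' B' F := by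
  have h' := K.comp_mor _ _ _ _ _ (K.comp_mor _ _ _ _ _ (K.k2 _ _ _ hA.2) h) hB.2
  rwa [swapGraph_idGraph, relComp_idGraph_left fun p hp => (K.inCarriers_of_isMor h p hp).1,
    relComp_idGraph_right fun p hp => (K.inCarriers_of_isMor h p hp).2] at h'

theorem isMor_of_le_of_inCarriers (h : K.IsMor A' B' F) (hA : Le K.IsMor A A')
    (hB : Le K.IsMor B B') (hF : inCarriers A B F) : K.IsMor A B F := by
  have h' := K.comp_mor _ _ _ _ _ (K.comp_mor _ _ _ _ _ hA.2 h) (K.k2 _ _ _ hB.2)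
  rwa [swapGraph_idGraph, relComp_idGraph_left fun p hp => (hF p hp).1,
    relComp_idGraph_right fun p hp => (hF p hp).2] at h'

def IsMaximal (A : Mdl L W) : Prop :=
  ∀ A', Le K.IsMor A A' → Le K.IsMor A' A

def Model : Type u := {A : Mdl L W // K.IsMdl A}

instance : Preorder K.Model where
  le A B := Le K.IsMor A.1 B.1
  le_refl A := K.le_refl_of_isMdl A.2
  le_trans _ _ _ := K.le_trans

end CatC

namespace IAC

variable (K : IAC L W) {A B : Mdl L W} {F : Set (W × W)}

theorem bddAbove_of_isChain {c : Set K.Model} (hc : IsChain (· ≤ ·) c) (hne : c.Nonempty) :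
    BddAbove c := by
  classical
  have : Nonempty (Antisymmetrization c (· ≤ ·)) := hne.to_subtype.map (toAntisymmetrization _)
  have : Std.Total (α := c) (· ≤ ·) := ⟨fun a b => hc.total a.2 b.2⟩
  -- axiom In wants a linearly ordered index set, so index the chain by its antisymmetrization
  obtain ⟨U, -, hU, hle⟩ := K.ind (Antisymmetrization c (· ≤ ·))
    (fun i => (ofAntisymmetrization _ i).1.1)
    fun _ _ hij => ofAntisymmetrization_le_ofAntisymmetrization_iff.2 hij
  refine ⟨⟨U, hU⟩, fun A hA => K.le_trans ?_ (hle (toAntisymmetrization _ ⟨A, hA⟩))⟩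
  have h : (⟨A, hA⟩ : c) ≤ ofAntisymmetrization _ (toAntisymmetrization _ ⟨A, hA⟩) :=
    toAntisymmetrization_le_toAntisymmetrization_iff.1
      (toAntisymmetrization_ofAntisymmetrization _ _).ge
  exact h

theorem exists_le_isMaximal {M : Mdl L W} (hM : K.IsMdl M) :
    ∃ A, Le K.IsMor M A ∧ K.IsMaximal A := by
  obtain ⟨A, hMA, hA⟩ := zorn_le_nonempty₀ (univ : Set K.Model)
    (fun c _ hc y hy => let ⟨U, hU⟩ := K.bddAbove_of_isChain hc ⟨y, hy⟩; ⟨U, mem_univ U, hU⟩)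
    ⟨M, hM⟩ (mem_univ _)
  exact ⟨A.1, hMA, fun A' hAA' => hA.2 (y := ⟨A', K.mor_tgt _ _ _ hAA'.2⟩) (mem_univ _) hAA'⟩

theorem exists_insert_isMor_of_isMaximal_right (hB : K.IsMaximal B) (hF : K.IsMor A B F)
    {a : W} (ha : a ∈ A.s) : ∃ b ∈ B.s, K.IsMor A B (insert (a, b) F) := by
  obtain ⟨B', H, hBB', hFH, hH, htot⟩ := K.ap A B F hF
  obtain ⟨b, hab⟩ := htot a ha
  have hB'B := hB B' hBB'
  refine ⟨b, hB'B.1 (K.inCarriers_of_isMor hH _ hab).2, ?_⟩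
  exact K.isMor_of_le (K.restr _ _ _ _ hH (insert_subset hab hFH))
    (K.le_refl_of_isMdl (K.mor_src _ _ _ hF)) hB'B

theorem exists_insert_isMor_of_isMaximal_left (hA : K.IsMaximal A) (hF : K.IsMor A B F)
    {b : W} (hb : b ∈ B.s) : ∃ a ∈ A.s, K.IsMor A B (insert (a, b) F) := by
  obtain ⟨a, ha, h⟩ := K.exists_insert_isMor_of_isMaximal_right hA (K.k2 _ _ _ hF) hb
  have h' := K.k2 _ _ _ h
  rw [swapGraph_insert] at h'
  exact ⟨a, ha, h'⟩

theorem isBackAndForth_of_isMaximal (hA : K.IsMaximal A) (hB : K.IsMaximal B) :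
    IsBackAndForth L {F : Set (A.s × B.s) | K.IsMor A B (Prod.map (↑) (↑) '' F)} where
  preservesQF _ hF m ψ hψ x y hxy :=
    (K.mor_pe _ _ _ hF).2 m ψ hψ x y fun i => mem_image_of_mem _ (hxy i)
  forth F hF a := by
    obtain ⟨b, hb, h⟩ := K.exists_insert_isMor_of_isMaximal_right hB hF a.2
    refine ⟨⟨b, hb⟩, ?_⟩
    rwa [mem_ofPred_eq, image_insert_eq]
  back F hF b := by
    obtain ⟨a, ha, h⟩ := K.exists_insert_isMor_of_isMaximal_left hA hF b.2
    refine ⟨⟨a, ha⟩, ?_⟩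
    rwa [mem_ofPred_eq, image_insert_eq]

theorem isElemMap_of_isMor (hA : K.IsMaximal A) (hB : K.IsMaximal B) (hF : K.IsMor A B F) :
    IsElemMap A B F := by
  refine ⟨K.inCarriers_of_isMor hF, fun n φ x y hxy => ?_⟩
  have hxy' : K.IsMor A B (Prod.map (↑) (↑) '' range fun i => (x i, y i)) := by
    refine K.restr _ _ _ _ hF ?_
    rintro _ ⟨_, ⟨i, rfl⟩, rfl⟩
    exact hxy i
  exact (K.isBackAndForth_of_isMaximal hA hB).realize_boundedFormula_iff φ _ hxy'
    (fun i => ⟨i, rfl⟩) finZeroElim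

end IAC

theorem statement_8_general (K : IAC L W) (M N : Mdl L W) (G : Set (W × W)) :
    K.IsMor M N G ↔ ∀ H ⊆ G, H.Finite → K.IsMor M N H := by
  refine ⟨fun hG H hHG _ => K.restr M N H G hG hHG, fun hfin => ?_⟩
  have hMN := hfin ∅ (empty_subset G) finite_empty
  obtain ⟨A, hMA, hA⟩ := K.exists_le_isMaximal (K.mor_src _ _ _ hMN)
  obtain ⟨B, hNB, hB⟩ := K.exists_le_isMaximal (K.mor_tgt _ _ _ hMN)
  have hG : inCarriers M N G := fun p hp =>
    K.inCarriers_of_isMor (hfin {p} (singleton_subset_iff.2 hp) (finite_singleton p)) p rfl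
  have hAB : IsElemMap A B G :=
    isElemMap_of_forall_finite_subset (fun p hp => ⟨hMA.1 (hG p hp).1, hNB.1 (hG p hp).2⟩)
      fun H hHG hH => K.isElemMap_of_isMor hA hB (K.isMor_of_le (hfin H hHG hH) hMA hNB)
  exact K.isMor_of_le_of_inCarriers (K.k1 A B G (K.mor_tgt _ _ _ hMA.2) (K.mor_tgt _ _ _ hNB.2) hAB)
    hMA hNB hG

/-- Finite character: a map is a morphism iff all its finite restrictions
are morphisms. -/
theorem statement_8 (K : IAC L W) (M N : Mdl L W) (hM : K.IsMdl M) (hN : K.IsMdl N)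
    (G : Set (W × W)) (hin : inCarriers M N G)
    (hfun : ∀ a b b', (a, b) ∈ G → (a, b') ∈ G → b = b') :
    K.IsMor M N G ↔ ∀ H ⊆ G, H.Finite → K.IsMor M N H :=
  statement_8_general K M N G

end Amalg
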